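/- arXiv:1601.06814 — 2 statements merged into one kernel-verified Lean document; each statement's English description precedes it below -/
import Mathlib

section
/- For any fully digital beamforming matrix V_FD ∈ ℂ^{N×N_s}, there exist a matrix V_RF ∈ ℂ^{N×2N_s} all of whose entries have unit modulus and a matrix V_D ∈ ℂ^{2N_s×N_s} such that V_RF · V_D = V_FD. -/
/-!
Every `z : ℂ` with `‖z‖ ≤ 2` is the sum of the two unit-modulus numbers
`exp ((arg z ± arccos (‖z‖ / 2)) i)`. Choosing `c > 0` with `‖V_FD i k‖ ≤ 2c` for all entries,
this writes `V_FD = c (U + V)` with `U`, `V` entrywise unit-modulus, so `V_FD = [U V] · [c I; c I]`.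
-/

open Complex

theorem Complex.exists_norm_eq_one_add_eq {z : ℂ} (hz : ‖z‖ ≤ 2) :
    ∃ u v : ℂ, ‖u‖ = 1 ∧ ‖v‖ = 1 ∧ u + v = z := by
  set θ := Real.arccos (‖z‖ / 2)
  have hcos : Real.cos θ = ‖z‖ / 2 :=
    Real.cos_arccos (by linarith [norm_nonneg z]) (by linarith)
  refine ⟨exp (↑(arg z + θ) * I), exp (↑(arg z - θ) * I),
    norm_exp_ofReal_mul_I _, norm_exp_ofReal_mul_I _, ?_⟩
  calc exp (↑(arg z + θ) * I) + exp (↑(arg z - θ) * I)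
      = exp (arg z * I) * (exp (θ * I) + exp (-θ * I)) := by
        push_cast
        rw [mul_add, ← exp_add, ← exp_add]
        ring_nf
    _ = exp (arg z * I) * (2 * Real.cos θ) := by rw [← two_cos, ofReal_cos]
    _ = z := by rw [hcos, ofReal_div, ofReal_ofNat, mul_div_cancel₀ _ two_ne_zero, mul_comm,
                  norm_mul_exp_arg_mul_I]

namespace Matrix

variable {m n : Type*}

theorem exists_pos_norm_entry_le [Finite m] [Finite n] (A : Matrix m n ℂ) :
    ∃ c : ℝ, 0 < c ∧ ∀ i j, ‖A i j‖ ≤ c := by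
  obtain ⟨C, hC⟩ := Finite.bddAbove_range fun p : m × n => ‖A p.1 p.2‖
  exact ⟨max C 1, by positivity, fun i j => (hC ⟨(i, j), rfl⟩).trans (le_max_left _ _)⟩

theorem exists_norm_eq_one_smul_add_eq (A : Matrix m n ℂ) {c : ℝ} (hc : 0 < c)
    (hA : ∀ i j, ‖A i j‖ ≤ 2 * c) :
    ∃ U V : Matrix m n ℂ, (∀ i j, ‖U i j‖ = 1) ∧ (∀ i j, ‖V i j‖ = 1) ∧
      (c : ℂ) • (U + V) = A := by
  have hc' : (c : ℂ) ≠ 0 := ofReal_ne_zero.mpr hc.ne'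
  have hscaled (i j) : ‖A i j / c‖ ≤ 2 := by
    rw [norm_div, norm_real, Real.norm_of_nonneg hc.le, div_le_iff₀ hc]
    exact hA i j
  choose U V hU hV hUV using fun i j => Complex.exists_norm_eq_one_add_eq (hscaled i j)
  refine ⟨of U, of V, hU, hV, ?_⟩
  ext i j
  simp only [smul_apply, add_apply, of_apply, hUV, smul_eq_mul, mul_div_cancel₀ _ hc']

theorem exists_norm_eq_one_fromCols_mul_eq [Fintype m] [Fintype n] [DecidableEq n]
    (A : Matrix m n ℂ) :
    ∃ (R : Matrix m (n ⊕ n) ℂ) (D : Matrix (n ⊕ n) n ℂ), (∀ i j, ‖R i j‖ = 1) ∧ R * D = A := by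
  obtain ⟨c, hc, hA⟩ := exists_pos_norm_entry_le A
  obtain ⟨U, V, hU, hV, hUV⟩ :=
    exists_norm_eq_one_smul_add_eq A hc fun i j => (hA i j).trans (by linarith)
  refine ⟨fromCols U V, fromRows ((c : ℂ) • 1) ((c : ℂ) • 1), ?_, ?_⟩
  · rintro i (j | j)
    exacts [hU i j, hV i j]
  · rw [fromCols_mul_fromRows, Matrix.mul_smul, Matrix.mul_smul, Matrix.mul_one, Matrix.mul_one, ← smul_add, hUV]

end Matrix

theorem stmt_3 (N Ns : ℕ) (V_FD : Matrix (Fin N) (Fin Ns) ℂ) :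
    ∃ (V_RF : Matrix (Fin N) (Fin (2 * Ns)) ℂ) (V_D : Matrix (Fin (2 * Ns)) (Fin Ns) ℂ),
      (∀ i j, ‖V_RF i j‖ = 1) ∧ V_RF * V_D = V_FD := by
  obtain ⟨R, D, hR, hRD⟩ := V_FD.exists_norm_eq_one_fromCols_mul_eq
  let e : Fin Ns ⊕ Fin Ns ≃ Fin (2 * Ns) := finSumFinEquiv.trans (finCongr (two_mul Ns).symm)
  refine ⟨R.submatrix id e.symm, D.submatrix e.symm id, fun i j => hR i _, ?_⟩
  rw [Matrix.submatrix_mul_equiv, hRD, Matrix.submatrix_id_id]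
end

section
/- If V_FD ∈ ℂ^{N×N_s} has rank r, then there exist a matrix V_RF ∈ ℂ^{N×2r} with all entries of unit modulus and a matrix V_D ∈ ℂ^{2r×N_s} such that V_RF · V_D = V_FD. -/
/-!
Factor `V_FD = L * R` through its column space, with `L` having `r` columns. A complex number
`a` with `‖a‖ ≤ 2` is the sum `e^{i(θ + φ)} + e^{i(θ - φ)}` of two unit-modulus numbers, where
`θ = arg a` and `2 cos φ = ‖a‖`. Rescaling `L` by a real `c > 0` so that its entries have modulus
at most `2` and splitting every entry this way gives `L = c (U + V) = [U V] * [c I; c I]` with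
`U`, `V` of unit-modulus entries.
-/

open Complex in
theorem Complex.exists_add_eq_of_norm_le_two {a : ℂ} (ha : ‖a‖ ≤ 2) :
    ∃ u v : ℂ, ‖u‖ = 1 ∧ ‖v‖ = 1 ∧ u + v = a := by
  set θ := arg a
  set φ := Real.arccos (‖a‖ / 2)
  have hcos : 2 * Real.cos φ = ‖a‖ := by
    rw [Real.cos_arccos (by linarith [norm_nonneg a]) (by linarith)]; ring
  refine ⟨exp (↑(θ + φ) * I), exp (↑(θ - φ) * I), norm_exp_ofReal_mul_I _,
    norm_exp_ofReal_mul_I _, ?_⟩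
  calc exp (↑(θ + φ) * I) + exp (↑(θ - φ) * I)
      = (2 * cos φ) * exp (θ * I) := by
        rw [two_cos, add_mul, ← exp_add, ← exp_add]
        push_cast
        ring_nf
    _ = a := by rw [← ofReal_cos, ← ofReal_ofNat, ← ofReal_mul, hcos, norm_mul_exp_arg_mul_I]

namespace Matrix

variable {m n : Type*}

theorem exists_mul_eq_of_rank_eq {K : Type*} [Field K] [Fintype n] {r : ℕ} (A : Matrix m n K)
    (h : A.rank = r) : ∃ (L : Matrix m (Fin r) K) (R : Matrix (Fin r) n K), L * R = A := by
  classical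
  set W := LinearMap.range A.mulVecLin
  let b : Module.Basis (Fin r) K W := Module.finBasisOfFinrankEq K W h
  have hcol (k : n) : A.col k ∈ W := ⟨Pi.single k 1, mulVec_single_one A k⟩
  refine ⟨of fun i j => (b j : m → K) i, of fun j k => b.repr ⟨A.col k, hcol k⟩ j, ?_⟩
  ext i k
  have := congr_arg (fun w : W => (w : m → K) i) (b.sum_repr ⟨A.col k, hcol k⟩)
  simp only [Submodule.coe_sum, Submodule.coe_smul, Finset.sum_apply, Pi.smul_apply,
    smul_eq_mul] at this
  simpa [mul_apply, mul_comm] using this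

theorem exists_eq_smul_add_of_norm_entries_eq_one [Finite m] [Finite n] (A : Matrix m n ℂ) :
    ∃ (c : ℂ) (U V : Matrix m n ℂ), (∀ i j, ‖U i j‖ = 1) ∧ (∀ i j, ‖V i j‖ = 1) ∧
      A = c • (U + V) := by
  obtain ⟨M, hM⟩ := Finite.exists_le fun ij : m × n => ‖A ij.1 ij.2‖
  set c : ℝ := max M 1
  have hc : 0 < c := lt_max_of_lt_right one_pos
  have hbound (i : m) (j : n) : ‖(c : ℂ)⁻¹ * A i j‖ ≤ 2 := by
    rw [norm_mul, norm_inv, Complex.norm_real, Real.norm_of_nonneg hc.le, inv_mul_le_iff₀ hc]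
    linarith [hM (i, j), le_max_left M 1]
  choose U V hU hV hUV using fun i j => Complex.exists_add_eq_of_norm_le_two (hbound i j)
  refine ⟨c, of U, of V, hU, hV, ?_⟩
  ext i j
  simp [hUV, hc.ne']

theorem exists_fromCols_mul_eq_of_norm_entries_eq_one [Finite m] [Fintype n] [DecidableEq n]
    (A : Matrix m n ℂ) :
    ∃ (P : Matrix m (n ⊕ n) ℂ) (D : Matrix (n ⊕ n) n ℂ), (∀ i j, ‖P i j‖ = 1) ∧ P * D = A := by
  obtain ⟨c, U, V, hU, hV, rfl⟩ := A.exists_eq_smul_add_of_norm_entries_eq_one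
  refine ⟨fromCols U V, fromRows (c • 1) (c • 1), ?_, ?_⟩
  · rintro i (j | j)
    exacts [hU i j, hV i j]
  · rw [fromCols_mul_fromRows, Matrix.mul_smul, Matrix.mul_smul, Matrix.mul_one, Matrix.mul_one,
      smul_add]

end Matrix

theorem stmt_4 (N Ns r : ℕ) (V_FD : Matrix (Fin N) (Fin Ns) ℂ) (hrank : V_FD.rank = r) :
    ∃ (V_RF : Matrix (Fin N) (Fin (2 * r)) ℂ) (V_D : Matrix (Fin (2 * r)) (Fin Ns) ℂ),
      (∀ i j, ‖V_RF i j‖ = 1) ∧ V_RF * V_D = V_FD := by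
  obtain ⟨L, R, rfl⟩ := V_FD.exists_mul_eq_of_rank_eq hrank
  obtain ⟨P, D, hP, rfl⟩ := L.exists_fromCols_mul_eq_of_norm_entries_eq_one
  let e : Fin r ⊕ Fin r ≃ Fin (2 * r) := finSumFinEquiv.trans (finCongr (two_mul r).symm)
  refine ⟨P.submatrix id e.symm, (D * R).submatrix e.symm id, fun i j => hP _ _, ?_⟩
  rw [Matrix.submatrix_mul_equiv, Matrix.submatrix_id_id, Matrix.mul_assoc]
end
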